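/- Let w_{t,r} : 𝔸(r) → 𝔸(r^{1+t}) be the pinching model (arg w_t(z) = arg z, log|w_t(z)| = ϱ_t(log|z|) with ϱ_t as in the pinching model definition). Let r(t₀) = r^{1/(2e^{2t₀})} and let E_{t₀} be one of the two components of 𝔸(r) ∖ cl(𝔸(r(t₀))). Then for all t ≥ t₀, mod w_t(E_{t₀}) = ((2t₀+1)/4) · mod 𝔸(r); in particular mod w_t(E_{t₀}) → ∞ as t₀ → ∞. -/

import Mathlib

noncomputable section

open Set

def stdAnnulus (r : ℝ) : Set ℂ := {z : ℂ | 1 / r < ‖z‖ ∧ ‖z‖ < r}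

/-- `A` is an annulus of modulus `m`: conformally equivalent to `𝔸(r)` with
`m = (log r)/π`. -/
def HasModulus (A : Set ℂ) (m : ℝ) : Prop :=
  ∃ r : ℝ, 1 < r ∧ m = Real.log r / Real.pi ∧
    ∃ f : ℂ → ℂ, DifferentiableOn ℂ f A ∧ Set.BijOn f A (stdAnnulus r)

/-- The radial profile of the pinching model for `x ≥ 0`. -/
def varrhoPos (r t x : ℝ) : ℝ := by
  classical exact
    if x ≤ Real.log r / (2 * Real.exp (2 * t)) then Real.exp (2 * t) * x
    else if x < Real.log r / 2 then
      (Real.log (2 * x / Real.log r) + 1 + 2 * t) * Real.log r / 2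
    else x + t * Real.log r

/-- The radial profile `ϱ_t`, extended as an odd function. -/
def varrho (r t x : ℝ) : ℝ := by
  classical exact if 0 ≤ x then varrhoPos r t x else - varrhoPos r t (-x)

/-- The pinching model homeomorphism `w_{t,r}`: it preserves arguments and acts by
`ϱ_t` on `log |z|`. -/
def pinch (r t : ℝ) (z : ℂ) : ℂ := by
  classical exact
    if z = 0 then 0
    else ((Real.exp (varrho r t (Real.log (‖z‖))) / ‖z‖ : ℝ) : ℂ) * z

/-! Since `pinch r t` preserves arguments and acts on `log ‖z‖` by `varrho r t`, it maps the round
annulus with log-radii in `(a, b)` onto the one with log-radii in `varrho r t '' (a, b)`, and a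
round annulus with log-radii in `(A, B)` has modulus `(B - A) / 2π`. For `t ≥ t₀` the log-radii
`(log r / (2 e^{2t₀}), log r)` of the outer component lie where `varrho r t` is
`x ↦ (log (2x / log r) + 1 + 2t) log r / 2` up to `log r / 2` and a translation by `t log r` after;
the image is an interval of length `(2t₀ + 1) log r / 2`, whatever `t` is. The inner component is
handled by the oddness of `varrho r t`. -/

open scoped Pointwise

namespace Pinching

def annulus (a b : ℝ) : Set ℂ := {z : ℂ | a < ‖z‖ ∧ ‖z‖ < b}

lemma mem_annulus_exp {A B : ℝ} {z : ℂ} :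
    z ∈ annulus (Real.exp A) (Real.exp B) ↔ z ≠ 0 ∧ Real.log ‖z‖ ∈ Ioo A B := by
  constructor
  · rintro ⟨hA, hB⟩
    have hz : 0 < ‖z‖ := (Real.exp_pos A).trans hA
    exact ⟨norm_pos_iff.mp hz, (Real.lt_log_iff_exp_lt hz).mpr hA,
      (Real.log_lt_iff_lt_exp hz).mpr hB⟩
  · rintro ⟨hz, hA, hB⟩
    have hz : 0 < ‖z‖ := norm_pos_iff.mpr hz
    exact ⟨(Real.lt_log_iff_exp_lt hz).mp hA, (Real.log_lt_iff_lt_exp hz).mp hB⟩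

lemma image_const_mul_annulus {c : ℝ} (hc : 0 < c) (a b : ℝ) :
    (fun z : ℂ => (c : ℂ) * z) '' annulus a b = annulus (c * a) (c * b) := by
  have hc' : (c : ℂ) ≠ 0 := Complex.ofReal_ne_zero.mpr hc.ne'
  have hnorm : ∀ z : ℂ, ‖(c : ℂ) * z‖ = c * ‖z‖ := fun z => by
    rw [norm_mul, Complex.norm_real, Real.norm_of_nonneg hc.le]
  ext w
  constructor
  · rintro ⟨z, ⟨ha, hb⟩, rfl⟩
    show c * a < ‖_‖ ∧ ‖_‖ < c * b
    rw [hnorm]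
    exact ⟨mul_lt_mul_of_pos_left ha hc, mul_lt_mul_of_pos_left hb hc⟩
  · rintro ⟨ha, hb⟩
    refine ⟨w / c, ?_, mul_div_cancel₀ w hc'⟩
    have hw : ‖w‖ = c * ‖w / c‖ := by rw [← hnorm, mul_div_cancel₀ w hc']
    rw [hw] at ha hb
    exact ⟨lt_of_mul_lt_mul_left ha hc.le, lt_of_mul_lt_mul_left hb hc.le⟩

lemma hasModulus_annulus_exp {A B : ℝ} (hAB : A < B) :
    HasModulus (annulus (Real.exp A) (Real.exp B)) ((B - A) / (2 * Real.pi)) := by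
  set R := Real.exp ((B - A) / 2)
  -- rescaling by `c` centres the log-radii at `0`
  set c := Real.exp (-(A + B) / 2)
  have hscaled : annulus (c * Real.exp A) (c * Real.exp B) = stdAnnulus R := by
    simp only [c, R, stdAnnulus, annulus, ← Real.exp_add, one_div, ← Real.exp_neg]
    ring_nf
  refine ⟨R, Real.one_lt_exp_iff.mpr (by linarith), ?_, fun z => (c : ℂ) * z,
    (differentiable_id.const_mul _).differentiableOn, ?_⟩
  · rw [Real.log_exp]; ring
  · rw [← hscaled, ← image_const_mul_annulus (Real.exp_pos _)]
    exact (mul_right_injective₀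
      (Complex.ofReal_ne_zero.mpr (Real.exp_pos _).ne')).injOn.bijOn_image

lemma norm_pinch {r t : ℝ} {z : ℂ} (hz : z ≠ 0) :
    ‖pinch r t z‖ = Real.exp (varrho r t (Real.log ‖z‖)) := by
  have hz' : 0 < ‖z‖ := norm_pos_iff.mpr hz
  rw [pinch, if_neg hz, norm_mul, Complex.norm_real, Real.norm_of_nonneg (by positivity),
    div_mul_cancel₀ _ hz'.ne']

lemma norm_exp_mul {u : ℂ} (hu : ‖u‖ = 1) (s : ℝ) : ‖(Real.exp s : ℂ) * u‖ = Real.exp s := by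
  rw [norm_mul, hu, mul_one, Complex.norm_real, Real.norm_of_nonneg (Real.exp_pos s).le]

lemma pinch_exp_mul {r t : ℝ} (s : ℝ) {u : ℂ} (hu : ‖u‖ = 1) :
    pinch r t (Real.exp s * u) = Real.exp (varrho r t s) * u := by
  have hne : (Real.exp s : ℂ) * u ≠ 0 := by
    rw [← norm_pos_iff, norm_exp_mul hu]; exact Real.exp_pos s
  rw [pinch, if_neg hne, norm_exp_mul hu, Real.log_exp, ← mul_assoc, ← Complex.ofReal_mul,
    div_mul_cancel₀ _ (Real.exp_pos s).ne']

lemma image_pinch_annulus_exp {r t a b A B : ℝ}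
    (h : varrho r t '' Ioo a b = Ioo A B) :
    pinch r t '' annulus (Real.exp a) (Real.exp b) = annulus (Real.exp A) (Real.exp B) := by
  ext w
  constructor
  · rintro ⟨z, hz, rfl⟩
    obtain ⟨hz, hlog⟩ := mem_annulus_exp.mp hz
    have hnorm := norm_pinch (r := r) (t := t) hz
    refine mem_annulus_exp.mpr ⟨norm_pos_iff.mp (hnorm ▸ Real.exp_pos _), ?_⟩
    rw [hnorm, Real.log_exp, ← h]
    exact mem_image_of_mem _ hlog
  · intro hw
    obtain ⟨hw, hlog⟩ := mem_annulus_exp.mp hw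
    rw [← h] at hlog
    obtain ⟨x, hx, hxw⟩ := hlog
    have hw' : 0 < ‖w‖ := norm_pos_iff.mpr hw
    have hu : ‖w / (‖w‖ : ℂ)‖ = 1 := by
      rw [norm_div, Complex.norm_real, Real.norm_of_nonneg hw'.le, div_self hw'.ne']
    have hnorm := norm_exp_mul hu x
    refine ⟨Real.exp x * (w / ‖w‖),
      mem_annulus_exp.mpr ⟨?_, ?_⟩, ?_⟩
    · rw [← norm_pos_iff, hnorm]; exact Real.exp_pos x
    · rwa [hnorm, Real.log_exp]
    · rw [pinch_exp_mul x hu, hxw, Real.exp_log hw']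
      exact mul_div_cancel₀ w (Complex.ofReal_ne_zero.mpr hw'.ne')

lemma varrho_neg {r t x : ℝ} (hx : x ≠ 0) : varrho r t (-x) = -varrho r t x := by
  rcases hx.lt_or_gt with hx | hx
  · rw [varrho, varrho, if_pos (by linarith), if_neg hx.not_ge, neg_neg]
  · rw [varrho, varrho, if_neg (by linarith), if_pos hx.le, neg_neg]

lemma varrho_of_le_half {r t x : ℝ} (hr : 1 < r)
    (hx₀ : Real.log r / (2 * Real.exp (2 * t)) < x) (hx : x ≤ Real.log r / 2) :
    varrho r t x =
      Real.log r / 2 * Real.log (2 / Real.log r * x) + (1 + 2 * t) * (Real.log r / 2) := by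
  have hL := Real.log_pos hr
  -- at `x = log r / 2` it is the third branch of `varrhoPos` that applies; the two agree there
  rw [varrho, if_pos ((div_pos hL (by positivity)).trans hx₀).le, varrhoPos, if_neg hx₀.not_ge]
  rcases hx.lt_or_eq with hx | rfl
  · rw [if_pos hx]
    ring_nf
  · rw [if_neg (lt_irrefl _), show 2 / Real.log r * (Real.log r / 2) = 1 by field_simp,
      Real.log_one]
    ring

lemma varrho_of_half_lt {r t x : ℝ} (hr : 1 < r)
    (hx₀ : Real.log r / (2 * Real.exp (2 * t)) < x) (hx : Real.log r / 2 < x) :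
    varrho r t x = x + t * Real.log r := by
  have hL := Real.log_pos hr
  rw [varrho, if_pos (by linarith), varrhoPos, if_neg hx₀.not_ge, if_neg hx.not_gt]

lemma varrho_image_Ioo {r t a b : ℝ} (hr : 1 < r)
    (ha₀ : Real.log r / (2 * Real.exp (2 * t)) ≤ a) (ha : a ≤ Real.log r / 2)
    (hb : Real.log r / 2 < b) :
    varrho r t '' Ioo a b =
      Ioo (Real.log r / 2 * Real.log (2 / Real.log r * a) + (1 + 2 * t) * (Real.log r / 2))
        (b + t * Real.log r) := by
  set L := Real.log r
  have hL : 0 < L := Real.log_pos hr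
  have ha0 : 0 < a := (div_pos hL (by positivity)).trans_le ha₀
  have hlog : varrho r t '' Ioc a (L / 2) =
      Ioc (L / 2 * Real.log (2 / L * a) + (1 + 2 * t) * (L / 2)) (L / 2 + t * L) := by
    rw [EqOn.image_eq fun x hx => varrho_of_le_half hr (ha₀.trans_lt hx.1) hx.2,
      show (fun x => L / 2 * Real.log (2 / L * x) + (1 + 2 * t) * (L / 2)) =
        (fun y => L / 2 * y + (1 + 2 * t) * (L / 2)) ∘ Real.log ∘ (fun x => 2 / L * x)
        from rfl,
      image_comp, image_comp, image_mul_left_Ioc (by positivity),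
      Real.image_log_Ioc (by positivity) (by gcongr), image_affine_Ioc (by positivity),
      show 2 / L * (L / 2) = 1 by field_simp, Real.log_one]
    ring_nf
  have hlin : varrho r t '' Ioo (L / 2) b = Ioo (L / 2 + t * L) (b + t * L) := by
    rw [EqOn.image_eq fun x hx => varrho_of_half_lt hr (by linarith [hx.1]) hx.1,
      image_add_const_Ioo]
  have hlog_nonpos : Real.log (2 / L * a) ≤ 0 :=
    Real.log_nonpos (by positivity) (by rw [div_mul_eq_mul_div, div_le_one hL]; linarith)
  rw [← Ioc_union_Ioo_eq_Ioo ha hb, image_union, hlog, hlin,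
    Ioc_union_Ioo_eq_Ioo (by nlinarith) (by linarith)]

lemma varrho_image_neg_Ioo {r t a b : ℝ} (ha : 0 ≤ a) :
    varrho r t '' Ioo (-b) (-a) = -(varrho r t '' Ioo a b) := by
  rw [← Set.neg_Ioo, ← image_neg_eq_neg, ← image_neg_eq_neg, image_image, image_image]
  exact EqOn.image_eq fun x hx => varrho_neg (ha.trans_lt hx.1).ne'

lemma varrho_image_Ioo_of_le {r t₀ t : ℝ} (hr : 1 < r) (ht₀ : 0 ≤ t₀) (ht : t₀ ≤ t) :
    varrho r t '' Ioo (Real.log r / (2 * Real.exp (2 * t₀))) (Real.log r) =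
      Ioo ((1 + 2 * t - 2 * t₀) * Real.log r / 2) ((1 + t) * Real.log r) := by
  have hL := Real.log_pos hr
  have hlog :
      Real.log (2 / Real.log r * (Real.log r / (2 * Real.exp (2 * t₀)))) = -(2 * t₀) := by
    rw [← Real.log_exp (-(2 * t₀)), Real.exp_neg]
    field_simp
  rw [varrho_image_Ioo hr (by gcongr) (by gcongr; simp [ht₀]) (by linarith), hlog]
  ring_nf

end Pinching

open Pinching

/-- With `r(t₀) = r^{1/(2 e^{2t₀})}` and `E_{t₀}` one of the two
components of `𝔸(r) ∖ cl 𝔸(r(t₀))`, for all `t ≥ t₀` the image `w_t(E_{t₀})` has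
modulus `((2t₀+1)/4)·mod 𝔸(r)`; in particular this modulus tends to `∞` with `t₀`. -/
theorem pinching_model_modulus (r t₀ : ℝ) (hr : 1 < r) (ht₀ : 0 ≤ t₀)
    (rt₀ : ℝ) (hrt₀ : rt₀ = Real.rpow r (1 / (2 * Real.exp (2 * t₀))))
    (E : Set ℂ)
    (hE : E = {z : ℂ | rt₀ < ‖z‖ ∧ ‖z‖ < r} ∨
          E = {z : ℂ | 1 / r < ‖z‖ ∧ ‖z‖ < 1 / rt₀}) :
    (∀ t ≥ t₀, HasModulus (pinch r t '' E) ((2 * t₀ + 1) / 4 * (Real.log r / Real.pi))) ∧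
    Filter.Tendsto (fun s : ℝ => (2 * s + 1) / 4 * (Real.log r / Real.pi))
      Filter.atTop Filter.atTop := by
  have hL := Real.log_pos hr
  have hr_exp : Real.exp (Real.log r) = r := Real.exp_log (by linarith)
  have hrt₀_exp : Real.exp (Real.log r / (2 * Real.exp (2 * t₀))) = rt₀ := by
    rw [hrt₀, Real.rpow_eq_pow, Real.rpow_def_of_pos (by linarith)]
    ring_nf
  refine ⟨fun t ht => ?_, ?_⟩
  · have himage := varrho_image_Ioo_of_le hr ht₀ ht
    have hwidth : (1 + 2 * t - 2 * t₀) * Real.log r / 2 < (1 + t) * Real.log r := by nlinarith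
    rcases hE with rfl | rfl
    · have h := image_pinch_annulus_exp himage
      rw [hrt₀_exp, hr_exp] at h
      rw [show {z : ℂ | rt₀ < ‖z‖ ∧ ‖z‖ < r} = annulus rt₀ r from rfl, h]
      convert hasModulus_annulus_exp hwidth using 1
      field_simp
      ring
    · have himage_neg :
          varrho r t '' Ioo (-Real.log r) (-(Real.log r / (2 * Real.exp (2 * t₀)))) =
            Ioo (-((1 + t) * Real.log r)) (-((1 + 2 * t - 2 * t₀) * Real.log r / 2)) := by
        rw [varrho_image_neg_Ioo (by positivity), himage, Set.neg_Ioo]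
      have h := image_pinch_annulus_exp himage_neg
      rw [Real.exp_neg, Real.exp_neg, hrt₀_exp, hr_exp, inv_eq_one_div, inv_eq_one_div] at h
      rw [show {z : ℂ | 1 / r < ‖z‖ ∧ ‖z‖ < 1 / rt₀} = annulus (1 / r) (1 / rt₀) from rfl, h]
      convert hasModulus_annulus_exp (neg_lt_neg hwidth) using 1
      field_simp
      ring
  · exact (((Filter.tendsto_id.const_mul_atTop two_pos).atTop_add tendsto_const_nhds)
      |>.atTop_div_const four_pos).atTop_mul_const (by positivity)
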